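/- arXiv:2009.04713 — 2 statements merged into one kernel-verified Lean document; each statement's English description precedes it below -/
import Mathlib

section
/- Let K : ℝ → ℝ be integrable, even, nonnegative with ∫_ℝ K(x) dx = 1. Suppose φ : ℝ → ℝ is continuous, bounded, solves the steady Whitham equation with wave speed c ∈ [1, 2], satisfies sup_{x∈ℝ} φ(x) ≤ c/2, and φ(x) → a as x → +∞ for some a ∈ ℝ. Then a = 0 or a = c − 1. -/
open MeasureTheory Filter Topology

/-- The limit at `+∞` of a bounded continuous solution of the steady Whitham equation with
wave speed `c ∈ [1,2]` and amplitude at most `c/2` is either `0` or `c - 1`. -/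
theorem whitham_limit_dichotomy
    (K φ : ℝ → ℝ) (c a : ℝ)
    (hK_int : Integrable K)
    (hK_even : ∀ x, K (-x) = K x)
    (hK_nonneg : ∀ x, 0 ≤ K x)
    (hK_mass : ∫ x, K x = 1)
    (hφ_cont : Continuous φ)
    (hφ_bdd : ∃ M, ∀ x, |φ x| ≤ M)
    (hc : c ∈ Set.Icc (1 : ℝ) 2)
    (hφ_sup : ∀ x, φ x ≤ c / 2)
    (hφ_lim : Tendsto φ atTop (𝓝 a))
    (heq : ∀ x, c * φ x - (∫ y, K y * φ (x - y)) - (φ x) ^ 2 = 0) :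
    a = 0 ∨ a = c - 1 := by
  obtain ⟨M, hM⟩ := hφ_bdd
  -- limit of the convolution term
  have hconv : Tendsto (fun x => ∫ y, K y * φ (x - y)) atTop (𝓝 (a * 1)) := by
    have := MeasureTheory.tendsto_integral_filter_of_dominated_convergence
      (μ := volume) (l := atTop) (F := fun x y => K y * φ (x - y))
      (f := fun y => K y * a) (bound := fun y => |K y| * M)
      (by
        filter_upwards with x
        exact (hK_int.aestronglyMeasurable.mul
          ((hφ_cont.comp (continuous_const.sub continuous_id)).aestronglyMeasurable)))
      (by
        filter_upwards with x
        filter_upwards with y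
        rw [Real.norm_eq_abs, abs_mul]
        exact mul_le_mul_of_nonneg_left (hM _) (abs_nonneg _))
      (hK_int.abs.mul_const M)
      (by
        filter_upwards with y
        exact (hφ_lim.comp (tendsto_atTop_add_const_right atTop (-y) tendsto_id)).const_mul
          (K y) |>.congr (fun x => by simp [sub_eq_add_neg, add_comm]))
    have h2 : (∫ y, K y * a) = a * 1 := by
      rw [integral_mul_const, hK_mass]; ring
    rwa [h2] at this
  have hlim : Tendsto (fun x => c * φ x - (∫ y, K y * φ (x - y)) - (φ x) ^ 2) atTop
      (𝓝 (c * a - a * 1 - a ^ 2)) :=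
    ((hφ_lim.const_mul c).sub hconv).sub (hφ_lim.pow 2)
  have h0 : Tendsto (fun x => c * φ x - (∫ y, K y * φ (x - y)) - (φ x) ^ 2) atTop
      (𝓝 (0 : ℝ)) := by
    simp only [heq]; exact tendsto_const_nhds
  have key : c * a - a * 1 - a ^ 2 = 0 := tendsto_nhds_unique hlim h0
  have : a * (a - (c - 1)) = 0 := by ring_nf; linarith [key]
  rcases mul_eq_zero.1 this with h | h
  · exact Or.inl h
  · exact Or.inr (by linarith)
end

section
/- For every θ ∈ ℝ and every η ∈ (0, π/2), the real part of tanh(θ − iη)/(θ − iη) is strictly positive. Equivalently, θ·sinh(2θ) + η·sin(2η) > 0 for all θ ∈ ℝ and η ∈ (0, π/2). -/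
/-!
For `z = x + iy` one has `sinh z * conj (cosh z) = (sinh 2x + i sin 2y) / 2`, hence
`Re (tanh z / z) = (x sinh 2x + y sin 2y) / (2 |z cosh z|²)`. In the numerator `x sinh 2x ≥ 0`
always, and `y sin 2y > 0` for `0 < |y| < π/2`, where also `cosh z ≠ 0` since `Re (cosh z) > 0`.
-/

open Real

open ComplexConjugate

namespace Complex

theorem sinh_mul_conj_cosh (z : ℂ) :
    sinh z * conj (cosh z) = (Real.sinh (2 * z.re) + Real.sin (2 * z.im) * I) / 2 := by
  have h := congrArg₂ (· + ·) (sinh_add z (conj z)) (sinh_sub z (conj z))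
  simp only [add_conj, sub_conj, sinh_mul_I] at h
  push_cast at h ⊢
  rw [← cosh_conj]
  linear_combination -h / 2

theorem re_tanh_div_self (z : ℂ) :
    (tanh z / z).re =
      (z.re * Real.sinh (2 * z.re) + z.im * Real.sin (2 * z.im)) / (2 * normSq (cosh z * z)) := by
  rw [tanh_eq_sinh_div_cosh, div_div, div_eq_mul_inv, inv_def, map_mul, ← mul_assoc,
    ← mul_assoc, sinh_mul_conj_cosh, re_mul_ofReal, mul_re, conj_re, conj_im]
  simp only [div_ofNat_re, div_ofNat_im, add_re, add_im, ofReal_re, ofReal_im, mul_re, mul_im,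
    I_re, I_im]
  field_simp
  ring

theorem cosh_re (z : ℂ) : (cosh z).re = Real.cosh z.re * Real.cos z.im := by
  conv_lhs => rw [← re_add_im z]
  rw [cosh_add, cosh_mul_I, sinh_mul_I]
  simp [cos_ofReal_re]

theorem cosh_ne_zero_of_abs_im_lt {z : ℂ} (h : |z.im| < π / 2) : cosh z ≠ 0 := by
  have hcos : 0 < Real.cos z.im := Real.cos_pos_of_mem_Ioo (abs_lt.mp h)
  intro h0
  have := congrArg re h0
  rw [cosh_re, zero_re] at this
  exact (mul_pos (Real.cosh_pos _) hcos).ne' this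

end Complex

theorem Real.mul_sinh_nonneg (x : ℝ) : 0 ≤ x * sinh x := by
  rcases le_total 0 x with hx | hx
  · exact mul_nonneg hx (sinh_nonneg_iff.2 hx)
  · exact mul_nonneg_of_nonpos_of_nonpos hx (sinh_nonpos_iff.2 hx)

theorem mul_sinh_two_mul_add_mul_sin_two_mul_pos (θ : ℝ) {η : ℝ} (hη₁ : 0 < η) (hη₂ : η < π / 2) :
    0 < θ * sinh (2 * θ) + η * sin (2 * η) := by
  have hsinh := Real.mul_sinh_nonneg (2 * θ)
  have hsin := mul_pos hη₁ (sin_pos_of_pos_of_lt_pi (by linarith) (by linarith : 2 * η < π))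
  linarith

/-- The squared Whitham symbol along the line `Im z = -η` stays in the open right half-plane:
its real part is strictly positive, equivalently `θ sinh(2θ) + η sin(2η) > 0`. -/
theorem re_whitham_symbol_sq_pos
    (θ η : ℝ) (hη₁ : 0 < η) (hη₂ : η < π / 2) :
    0 < (Complex.tanh ((θ : ℂ) - η * Complex.I) / ((θ : ℂ) - η * Complex.I)).re ∧
    0 < θ * Real.sinh (2 * θ) + η * Real.sin (2 * η) := by
  have hnum := mul_sinh_two_mul_add_mul_sin_two_mul_pos θ hη₁ hη₂
  refine ⟨?_, hnum⟩
  set z : ℂ := (θ : ℂ) - η * Complex.I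
  have hre : z.re = θ := by simp [z]
  have him : z.im = -η := by simp [z]
  have hz : z ≠ 0 := fun h => hη₁.ne' (by simpa [h] using him)
  have hcosh : Complex.cosh z ≠ 0 :=
    Complex.cosh_ne_zero_of_abs_im_lt (by rw [him, abs_neg, abs_of_pos hη₁]; exact hη₂)
  rw [Complex.re_tanh_div_self, hre, him, mul_neg, Real.sin_neg, neg_mul_neg]
  have hden := Complex.normSq_pos.2 (mul_ne_zero hcosh hz)
  positivity
end
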